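/- arXiv:1408.3723 — 2 statements merged into one kernel-verified Lean document; each statement's English description precedes it below -/
import Mathlib

section
/- Every solution of the ODE system u'' - u/16 = 0, v'' - v/16 + 1/4 = 0, w'' = 0 with u(0) = v(0) = w(0) = 0, subject to the algebraic constraints (1 - v/4)² + u²/16 = (u')² + (v')² + (w')² and (1 - v/4)u' + (u/4)v' = 0 holding identically, satisfies u ≡ 0, w(t) = ct for some c ∈ [-1,1], and v(t) = 2(-1 ± √(1-c²))e^{t/4} + 2(-1 ∓ √(1-c²))e^{-t/4} + 4. -/
noncomputable section

open Real Set

/-- Uniqueness for the second-order linear ODE `f'' = f/16 + k`. -/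
lemma ode2_sol (k : ℝ) (f : ℝ → ℝ) (hf : ContDiff ℝ (⊤ : ℕ∞) f)
    (hODE : ∀ t, deriv (deriv f) t = f t / 16 + k) (t : ℝ) :
    f t = ((f 0 + 16 * k) / 2 + 2 * deriv f 0) * Real.exp (t / 4)
        + ((f 0 + 16 * k) / 2 - 2 * deriv f 0) * Real.exp (-(t / 4)) - 16 * k := by
  have hf' : ContDiff ℝ (⊤ : ℕ∞) f := hf.of_le (by simp)
  obtain ⟨hdiff, hfd⟩ := contDiff_infty_iff_deriv.mp hf'
  have hdiff' : Differentiable ℝ (deriv f) := (contDiff_infty_iff_deriv.mp hfd).1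
  set a : ℝ := (f 0 + 16 * k) / 2 + 2 * deriv f 0 with ha
  set b : ℝ := (f 0 + 16 * k) / 2 - 2 * deriv f 0 with hb
  set F : ℝ → ℝ × ℝ → ℝ × ℝ := fun _ p => (p.2, p.1 / 16 + k) with hF
  have hlip : ∀ s : ℝ, LipschitzWith 1 (F s) := by
    intro s
    apply LipschitzWith.of_dist_le_mul
    intro p q
    simp only [hF, Prod.dist_eq, Real.dist_eq, NNReal.coe_one, one_mul]
    apply max_le
    · exact le_max_right _ _
    · have h1 : p.1 / 16 + k - (q.1 / 16 + k) = (p.1 - q.1) / 16 := by ring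
      rw [h1, abs_div, abs_of_nonneg (by norm_num : (0:ℝ) ≤ 16)]
      calc |p.1 - q.1| / 16 ≤ |p.1 - q.1| := by linarith [abs_nonneg (p.1 - q.1)]
        _ ≤ _ := le_max_left _ _
  set g : ℝ → ℝ × ℝ := fun s => (f s, deriv f s) with hg
  set sol : ℝ → ℝ := fun s => a * Real.exp (s / 4) + b * Real.exp (-(s / 4)) - 16 * k with hsol
  set sol' : ℝ → ℝ := fun s => a / 4 * Real.exp (s / 4) - b / 4 * Real.exp (-(s / 4)) with hsol'
  set h : ℝ → ℝ × ℝ := fun s => (sol s, sol' s) with hh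
  have hexp : ∀ s : ℝ, HasDerivAt (fun x : ℝ => Real.exp (x / 4)) (Real.exp (s / 4) / 4) s := by
    intro s
    simpa [Function.comp_def, div_eq_mul_inv] using (Real.hasDerivAt_exp (s / 4)).comp s ((hasDerivAt_id s).div_const 4)
  have hexp' : ∀ s : ℝ, HasDerivAt (fun x : ℝ => Real.exp (-(x / 4))) (-(Real.exp (-(s / 4)) / 4)) s := by
    intro s
    simpa [Function.comp_def, div_eq_mul_inv] using (Real.hasDerivAt_exp (-(s / 4))).comp s (((hasDerivAt_id s).div_const 4).neg)
  have hsolD : ∀ s, HasDerivAt sol (sol' s) s := by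
    intro s
    have := (((hexp s).const_mul a).add ((hexp' s).const_mul b)).sub_const (16 * k)
    refine this.congr_deriv ?_
    simp [hsol']; ring
  have hsolD' : ∀ s, HasDerivAt sol' (sol s / 16 + k) s := by
    intro s
    have := (((hexp s).const_mul (a / 4)).sub ((hexp' s).const_mul (b / 4)))
    refine this.congr_deriv ?_
    simp [hsol]; ring
  have hgD : ∀ s, HasDerivAt g (F s (g s)) s :=
    fun s => ((hdiff s).hasDerivAt).prodMk (by
      simpa [hF, hODE s] using (hdiff' s).hasDerivAt)
  have hhD : ∀ s, HasDerivAt h (F s (h s)) s :=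
    fun s => (hsolD s).prodMk (hsolD' s)
  have h00 : g 0 = h 0 := by
    simp only [hg, hh, hsol, hsol', Prod.mk.injEq]
    constructor <;> simp [ha, hb] <;> ring
  -- uniqueness on a big interval containing 0 and t
  have key : g t = h t := by
    have ht1 : t ∈ Icc (-(|t| + 1)) (|t| + 1) :=
      ⟨by linarith [neg_abs_le t], by linarith [le_abs_self t]⟩
    have h0 : (0:ℝ) ∈ Ioo (-(|t| + 1)) (|t| + 1) := by
      constructor <;> [linarith [abs_nonneg t]; linarith [abs_nonneg t]]
    exact ODE_solution_unique_of_mem_Icc (s := fun _ => univ)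
      (fun s _ => (hlip s).lipschitzOnWith) h0
      (fun s _ => (hgD s).continuousAt.continuousWithinAt)
      (fun s _ => hgD s) (fun _ _ => trivial)
      (fun s _ => (hhD s).continuousAt.continuousWithinAt)
      (fun s _ => hhD s) (fun _ _ => trivial) h00 ht1
  have := congrArg Prod.fst key
  simpa [hg, hh, hsol] using this


/-- Solutions of the circle ODE system with the isothermal algebraic constraints:
`u ≡ 0`, `w(t) = c t` with `c ∈ [-1,1]`, and
`v(t) = 2(-1 ± √(1-c²))e^{t/4} + 2(-1 ∓ √(1-c²))e^{-t/4} + 4`. -/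
theorem circle_ode_solutions
    (u v w : ℝ → ℝ)
    (hu : ContDiff ℝ (⊤ : ℕ∞) u) (hv : ContDiff ℝ (⊤ : ℕ∞) v) (hw : ContDiff ℝ (⊤ : ℕ∞) w)
    (hu0 : u 0 = 0) (hv0 : v 0 = 0) (hw0 : w 0 = 0)
    (hODEu : ∀ t, deriv (deriv u) t - u t / 16 = 0)
    (hODEv : ∀ t, deriv (deriv v) t - v t / 16 + 1 / 4 = 0)
    (hODEw : ∀ t, deriv (deriv w) t = 0)
    (hcon1 : ∀ t, (1 - v t / 4) ^ 2 + u t ^ 2 / 16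
      = (deriv u t) ^ 2 + (deriv v t) ^ 2 + (deriv w t) ^ 2)
    (hcon2 : ∀ t, (1 - v t / 4) * deriv u t + u t / 4 * deriv v t = 0) :
    (∀ t, u t = 0) ∧
    ∃ c ∈ Set.Icc (-1 : ℝ) 1,
      (∀ t, w t = c * t) ∧
      ((∀ t, v t = 2 * (-1 + Real.sqrt (1 - c ^ 2)) * Real.exp (t / 4)
          + 2 * (-1 - Real.sqrt (1 - c ^ 2)) * Real.exp (-(t / 4)) + 4)
        ∨ (∀ t, v t = 2 * (-1 - Real.sqrt (1 - c ^ 2)) * Real.exp (t / 4)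
          + 2 * (-1 + Real.sqrt (1 - c ^ 2)) * Real.exp (-(t / 4)) + 4)) := by
  classical
  have hud : Differentiable ℝ u := hu.differentiable (by simp)
  have hvd : Differentiable ℝ v := hv.differentiable (by simp)
  have hwd : Differentiable ℝ w := hw.differentiable (by simp)
  have hwd' : Differentiable ℝ (deriv w) :=
    (contDiff_infty_iff_deriv.mp (hw.of_le (by simp) : ContDiff ℝ (⊤ : ℕ∞) w)).2.differentiable (by simp)
  -- u'(0) = 0
  have du0 : deriv u 0 = 0 := by
    have := hcon2 0
    rw [hu0, hv0] at this
    simpa using this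
  -- u ≡ 0
  have hu_zero : ∀ t, u t = 0 := by
    intro t
    have := ode2_sol 0 u hu (fun s => by linarith [hODEu s]) t
    simpa [hu0, du0] using this
  refine ⟨hu_zero, ?_⟩
  set c : ℝ := deriv w 0 with hc
  have hdw : ∀ t, deriv w t = c := fun t => is_const_of_deriv_eq_zero hwd' hODEw t 0
  have hwct : ∀ t, w t = c * t := by
    have key : ∀ t, w t - c * t = w 0 - c * 0 := by
      intro t
      apply is_const_of_deriv_eq_zero (f := fun s => w s - c * s)
      · exact hwd.sub ((differentiable_id.const_mul c))
      · intro x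
        have : HasDerivAt (fun s => w s - c * s) (deriv w x - c) x := by
          exact ((hwd x).hasDerivAt.sub ((hasDerivAt_id x).const_mul c)).congr_deriv (by ring)
        rw [this.deriv, hdw x]; ring
    intro t
    have := key t
    rw [hw0] at this
    linarith
  set d : ℝ := deriv v 0 with hd
  have hdc : d ^ 2 + c ^ 2 = 1 := by
    have := hcon1 0
    rw [hu0, hv0, du0, hdw 0] at this
    simp at this
    linarith
  have hc2 : c ^ 2 ≤ 1 := by nlinarith [sq_nonneg d]
  have hcIcc : c ∈ Set.Icc (-1 : ℝ) 1 := by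
    constructor <;> nlinarith
  have hsq : 1 - c ^ 2 = d ^ 2 := by linarith
  have hvf : ∀ t, v t = (-2 + 2 * d) * Real.exp (t / 4)
      + (-2 - 2 * d) * Real.exp (-(t / 4)) + 4 := by
    intro t
    have := ode2_sol (-(1/4)) v hv (fun s => by linarith [hODEv s]) t
    rw [hv0] at this
    rw [this, ← hd]
    ring_nf
  refine ⟨c, hcIcc, hwct, ?_⟩
  rcases le_or_gt 0 d with hd0 | hd0
  · left
    intro t
    have hs : Real.sqrt (1 - c ^ 2) = d := by
      rw [hsq, Real.sqrt_sq hd0]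
    rw [hvf t, hs]; ring
  · right
    intro t
    have hs : Real.sqrt (1 - c ^ 2) = -d := by
      rw [hsq, Real.sqrt_sq_eq_abs, abs_of_neg hd0]
    rw [hvf t, hs]; ring
end
end

section
/- For every c ∈ [-1,1], the surface x(s,t) = (2((1 - √(1-c²))e^{t/4} + (1 + √(1-c²))e^{-t/4})cos(s/4), 2((1 - √(1-c²))e^{t/4} + (1 + √(1-c²))e^{-t/4})sin(s/4), ct) satisfies the isothermal conditions ⟨x_s,x_s⟩ = ⟨x_t,x_t⟩ and ⟨x_s,x_t⟩ = 0. -/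
noncomputable section

def dot3 (a b : ℝ × ℝ × ℝ) : ℝ := a.1 * b.1 + a.2.1 * b.2.1 + a.2.2 * b.2.2

def cross3 (a b : ℝ × ℝ × ℝ) : ℝ × ℝ × ℝ :=
  (a.2.1 * b.2.2 - a.2.2 * b.2.1, a.2.2 * b.1 - a.1 * b.2.2, a.1 * b.2.1 - a.2.1 * b.1)

def norm3 (a : ℝ × ℝ × ℝ) : ℝ := Real.sqrt (dot3 a a)

def pS (x : ℝ → ℝ → ℝ × ℝ × ℝ) (s t : ℝ) : ℝ × ℝ × ℝ := deriv (fun σ => x σ t) s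

def pT (x : ℝ → ℝ → ℝ × ℝ × ℝ) (s t : ℝ) : ℝ × ℝ × ℝ := deriv (fun τ => x s τ) t
/-- The minimal surface family passing the circle. -/
def xfam (c : ℝ) (s t : ℝ) : ℝ × ℝ × ℝ :=
  (2 * ((1 - Real.sqrt (1 - c ^ 2)) * Real.exp (t / 4)
      + (1 + Real.sqrt (1 - c ^ 2)) * Real.exp (-(t / 4))) * Real.cos (s / 4),
   2 * ((1 - Real.sqrt (1 - c ^ 2)) * Real.exp (t / 4)
      + (1 + Real.sqrt (1 - c ^ 2)) * Real.exp (-(t / 4))) * Real.sin (s / 4),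
   c * t)

/-!
`xfam c` is the surface of revolution with radius `ρ t = 2 (a e^{t/4} + b e^{-t/4})`,
`a = 1 - √(1 - c²)`, `b = 1 + √(1 - c²)`, height `c t` and angle `s / 4`. For any surface
of revolution `x_s ⊥ x_t`, and `|x_s|² = (ρ/4)²`, `|x_t|² = ρ'² + c²`. Since
`(ρ/4)² - ρ'² = a b · e^{t/4} e^{-t/4} = a b = 1 - (1 - c²) = c²`, the two lengths agree.
-/

open Real

def surfaceOfRevolution (ρ h : ℝ → ℝ) (ω : ℝ) (s t : ℝ) : ℝ × ℝ × ℝ :=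
  (ρ t * cos (s / ω), ρ t * sin (s / ω), h t)

section SurfaceOfRevolution

variable {ρ h : ℝ → ℝ} {ω s t : ℝ}

theorem pS_surfaceOfRevolution :
    pS (surfaceOfRevolution ρ h ω) s t =
      (-(ρ t / ω * sin (s / ω)), ρ t / ω * cos (s / ω), 0) := by
  have hangle : HasDerivAt (fun σ : ℝ => σ / ω) (1 / ω) s := (hasDerivAt_id s).div_const ω
  have hcos := ((hasDerivAt_cos (s / ω)).comp s hangle).const_mul (ρ t)
  have hsin := ((hasDerivAt_sin (s / ω)).comp s hangle).const_mul (ρ t)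
  refine ((hcos.prodMk (hsin.prodMk (hasDerivAt_const s (h t))))).deriv.trans ?_
  simp only [Prod.mk.injEq]
  refine ⟨?_, ?_, trivial⟩ <;> ring

theorem pT_surfaceOfRevolution {ρ' h' : ℝ} (hρ : HasDerivAt ρ ρ' t) (hh : HasDerivAt h h' t) :
    pT (surfaceOfRevolution ρ h ω) s t = (ρ' * cos (s / ω), ρ' * sin (s / ω), h') :=
  ((hρ.mul_const _).prodMk ((hρ.mul_const _).prodMk hh)).deriv

theorem surfaceOfRevolution_isothermal {ρ' h' : ℝ} (hρ : HasDerivAt ρ ρ' t)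
    (hh : HasDerivAt h h' t) (hconf : (ρ t / ω) ^ 2 = ρ' ^ 2 + h' ^ 2) :
    dot3 (pS (surfaceOfRevolution ρ h ω) s t) (pS (surfaceOfRevolution ρ h ω) s t) =
        dot3 (pT (surfaceOfRevolution ρ h ω) s t) (pT (surfaceOfRevolution ρ h ω) s t) ∧
      dot3 (pS (surfaceOfRevolution ρ h ω) s t) (pT (surfaceOfRevolution ρ h ω) s t) = 0 := by
  rw [pS_surfaceOfRevolution, pT_surfaceOfRevolution hρ hh]
  simp only [dot3]
  constructor
  · linear_combination (ρ t / ω) ^ 2 * sin_sq_add_cos_sq (s / ω) -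
      ρ' ^ 2 * sin_sq_add_cos_sq (s / ω) + hconf
  · ring

end SurfaceOfRevolution

theorem hasDerivAt_exp_div_add_exp_neg_div (a b ω t : ℝ) :
    HasDerivAt (fun τ => a * exp (τ / ω) + b * exp (-(τ / ω)))
      ((a * exp (t / ω) - b * exp (-(t / ω))) / ω) t := by
  have hangle : HasDerivAt (fun τ : ℝ => τ / ω) (1 / ω) t := (hasDerivAt_id t).div_const ω
  have hexp := ((hasDerivAt_exp (t / ω)).comp t hangle).const_mul a
  have hexp_neg := ((hasDerivAt_exp (-(t / ω))).comp t hangle.neg).const_mul b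
  exact (hexp.add hexp_neg).congr_deriv (by ring)

/-- The circle surface family satisfies the isothermal conditions. -/
theorem xfam_isothermal :
    ∀ c ∈ Set.Icc (-1 : ℝ) 1, ∀ s t,
      dot3 (pS (xfam c) s t) (pS (xfam c) s t) = dot3 (pT (xfam c) s t) (pT (xfam c) s t)
      ∧ dot3 (pS (xfam c) s t) (pT (xfam c) s t) = 0 := by
  intro c hc s t
  set r := √(1 - c ^ 2)
  have hr : r ^ 2 = 1 - c ^ 2 := sq_sqrt (by nlinarith [hc.1, hc.2])
  have hρ := (hasDerivAt_exp_div_add_exp_neg_div (1 - r) (1 + r) 4 t).const_mul 2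
  have hh : HasDerivAt (fun τ => c * τ) c t := by simpa using (hasDerivAt_id t).const_mul c
  have hexp : exp (t / 4) * exp (-(t / 4)) = 1 := by rw [← exp_add, add_neg_cancel, exp_zero]
  refine surfaceOfRevolution_isothermal (ω := 4) hρ hh ?_
  linear_combination (1 - r) * (1 + r) * hexp - hr
end
end
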